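/- The Γ coefficients satisfy the composition law Γ(τ₁, θ₁; θ₀) ⋆ Γ(τ₂, θ₂; θ₁) = Γ(τ₁+τ₂, θ₂; θ₀) for all τ₁, τ₂ ∈ ℝ and θ₀, θ₁, θ₂ ∈ 𝕋^d, where Γ is defined by the recursions: Γ_∅ = 1, Γ_k(τ,θ;θ₀) = (i/(k·ω))(e^{ik·θ₀} − e^{ik·θ}) for k ≠ 0, Γ_{0^r} = τ^r/r!, Γ_{0^r k} = (i/(k·ω))(Γ_{0^{r−1}k} − Γ_{0^r} e^{ik·θ}), Γ_{k l₁⋯l_s} = (i/(k·ω))(e^{ik·θ₀} Γ_{l₁⋯l_s} − Γ_{(k+l₁)l₂⋯l_s}), and Γ_{0^r k l₁⋯l_s} = (i/(k·ω))(Γ_{0^{r−1} k l₁⋯l_s} − Γ_{0^r (k+l₁) l₂⋯l_s}). -/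
import Mathlib


noncomputable def conv {A : Type*} (δ δ' : List A → ℂ) : List A → ℂ :=
  fun w => ∑ j ∈ Finset.range (w.length + 1), δ (w.take j) * δ' (w.drop j)


lemma conv_split {A : Type*} (δ δ' : List A → ℂ) (r : ℕ) (z : A) (t : List A) :
    conv δ δ' (List.replicate r z ++ t) =
      (∑ j ∈ Finset.range (r + 1),
        δ (List.replicate j z) * δ' (List.replicate (r - j) z ++ t)) +
      ∑ i ∈ Finset.range t.length,
        δ (List.replicate r z ++ t.take (i + 1)) * δ' (t.drop (i + 1)) := by
  show ∑ j ∈ Finset.range ((List.replicate r z ++ t).length + 1), _ = _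
  have hlen : (List.replicate r z ++ t).length + 1 = (r + 1) + t.length := by
    simp; omega
  rw [hlen, Finset.sum_range_add]
  congr 1
  · refine Finset.sum_congr rfl fun j hj => ?_
    have hj' : j ≤ r := by simpa [Nat.lt_succ_iff] using hj
    rw [List.take_append, List.drop_append]
    have h0' : j - (List.replicate r z).length = 0 := by simp; omega
    rw [h0', List.take_replicate, List.drop_replicate, Nat.min_eq_left hj']
    simp
  · refine Finset.sum_congr rfl fun i _ => ?_
    rw [List.take_append, List.drop_append]
    have h1 : min (r + 1 + i) r = r := by omega
    have h2 : r + 1 + i - (List.replicate r z).length = i + 1 := by simp; omega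
    have h3 : (List.replicate r z).drop (r + 1 + i) = [] := by
      rw [List.drop_replicate]
      simp [Nat.sub_eq_zero_of_le (by omega : r ≤ r + 1 + i)]
    rw [h3, List.take_replicate, h1, h2]
    simp

lemma conv_cons {A : Type*} (δ δ' : List A → ℂ) (a : A) (t : List A) :
    conv δ δ' (a :: t) = δ [] * δ' (a :: t) +
      ∑ i ∈ Finset.range (t.length + 1), δ (a :: t.take i) * δ' (t.drop i) := by
  show ∑ j ∈ Finset.range ((a :: t).length + 1), _ = _
  rw [List.length_cons, Finset.sum_range_succ']
  simp [add_comm]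

lemma decomp {A : Type*} [DecidableEq A] (z : A) (w : List A) :
    (∃ r, w = List.replicate r z) ∨
      ∃ (r : ℕ) (k : A) (ls : List A), k ≠ z ∧ w = List.replicate r z ++ k :: ls := by
  induction w with
  | nil => exact Or.inl ⟨0, rfl⟩
  | cons a w ih =>
    by_cases ha : a = z
    · subst ha
      rcases ih with ⟨r, rfl⟩ | ⟨r, k, ls, hk, rfl⟩
      · exact Or.inl ⟨r + 1, rfl⟩
      · exact Or.inr ⟨r + 1, k, ls, hk, rfl⟩
    · exact Or.inr ⟨0, a, w, ha, rfl⟩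


/-- Real dot product of an integer multiindex with a real vector. -/
def dotR {d : ℕ} (k : Fin d → ℤ) (x : Fin d → ℝ) : ℝ := ∑ j, (k j : ℝ) * x j

/-- `e^{i k·x}` as a complex number. -/
noncomputable def eExp {d : ℕ} (k : Fin d → ℤ) (x : Fin d → ℝ) : ℂ :=
  Complex.exp (Complex.I * (dotR k x : ℂ))

def Nonresonant {d : ℕ} (ω : Fin d → ℝ) : Prop :=
  ∀ k : Fin d → ℤ, dotR k ω = 0 → k = 0

/-- Composition law `Γ(τ₁,θ₁;θ₀) ⋆ Γ(τ₂,θ₂;θ₁) = Γ(τ₁+τ₂,θ₂;θ₀)` for the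
coefficients `Γ` determined by the recursions of Theorem 2. -/
theorem Gamma_composition {d : ℕ} (ω : Fin d → ℝ) (hω : Nonresonant ω)
    (Γ : ℝ → (Fin d → ℝ) → (Fin d → ℝ) → List (Fin d → ℤ) → ℂ)
    (hempty : ∀ τ θ θ₀, Γ τ θ θ₀ [] = 1)
    (hletter : ∀ τ θ θ₀ (k : Fin d → ℤ), k ≠ 0 →
      Γ τ θ θ₀ [k] = Complex.I / (dotR k ω : ℂ) * (eExp k θ₀ - eExp k θ))
    (hzeros : ∀ τ θ θ₀ (r : ℕ), 1 ≤ r →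
      Γ τ θ θ₀ (List.replicate r (0 : Fin d → ℤ)) =
        (τ : ℂ) ^ r / (r.factorial : ℂ))
    (hzerosk : ∀ τ θ θ₀ (r : ℕ), 1 ≤ r → ∀ (k : Fin d → ℤ), k ≠ 0 →
      Γ τ θ θ₀ (List.replicate r (0 : Fin d → ℤ) ++ [k]) =
        Complex.I / (dotR k ω : ℂ) *
          (Γ τ θ θ₀ (List.replicate (r - 1) (0 : Fin d → ℤ) ++ [k]) -
            Γ τ θ θ₀ (List.replicate r (0 : Fin d → ℤ)) * eExp k θ))
    (hk_tail : ∀ τ θ θ₀ (k : Fin d → ℤ), k ≠ 0 →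
      ∀ (l₁ : Fin d → ℤ) (ls : List (Fin d → ℤ)),
        Γ τ θ θ₀ (k :: l₁ :: ls) =
          Complex.I / (dotR k ω : ℂ) *
            (eExp k θ₀ * Γ τ θ θ₀ (l₁ :: ls) - Γ τ θ θ₀ ((k + l₁) :: ls)))
    (hzerosk_tail : ∀ τ θ θ₀ (r : ℕ), 1 ≤ r → ∀ (k : Fin d → ℤ), k ≠ 0 →
      ∀ (l₁ : Fin d → ℤ) (ls : List (Fin d → ℤ)),
        Γ τ θ θ₀ (List.replicate r (0 : Fin d → ℤ) ++ k :: l₁ :: ls) =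
          Complex.I / (dotR k ω : ℂ) *
            (Γ τ θ θ₀ (List.replicate (r - 1) (0 : Fin d → ℤ) ++ k :: l₁ :: ls) -
              Γ τ θ θ₀ (List.replicate r (0 : Fin d → ℤ) ++ (k + l₁) :: ls)))
    (τ₁ τ₂ : ℝ) (θ₀ θ₁ θ₂ : Fin d → ℝ) :
    conv (Γ τ₁ θ₁ θ₀) (Γ τ₂ θ₂ θ₁) = Γ (τ₁ + τ₂) θ₂ θ₀ := by
  classical
  have hz : ∀ (τ : ℝ) (θ θ' : Fin d → ℝ) (j : ℕ),
      Γ τ θ θ' (List.replicate j (0 : Fin d → ℤ)) = (τ : ℂ) ^ j / (j.factorial : ℂ) := by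
    intro τ θ θ' j
    cases j with
    | zero => simp [hempty]
    | succ j => exact hzeros τ θ θ' (j + 1) (by omega)
  suffices H : ∀ (n : ℕ) (w : List (Fin d → ℤ)), w.length ≤ n →
      conv (Γ τ₁ θ₁ θ₀) (Γ τ₂ θ₂ θ₁) w = Γ (τ₁ + τ₂) θ₂ θ₀ w by
    funext w
    exact H w.length w le_rfl
  have hzero_case : ∀ r : ℕ,
      conv (Γ τ₁ θ₁ θ₀) (Γ τ₂ θ₂ θ₁) (List.replicate r (0 : Fin d → ℤ)) =
        Γ (τ₁ + τ₂) θ₂ θ₀ (List.replicate r (0 : Fin d → ℤ)) := by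
    intro r
    have h1 : conv (Γ τ₁ θ₁ θ₀) (Γ τ₂ θ₂ θ₁) (List.replicate r (0 : Fin d → ℤ)) =
        ∑ j ∈ Finset.range (r + 1), Γ τ₁ θ₁ θ₀ (List.replicate j (0 : Fin d → ℤ)) *
          Γ τ₂ θ₂ θ₁ (List.replicate (r - j) (0 : Fin d → ℤ)) := by
      have := conv_split (Γ τ₁ θ₁ θ₀) (Γ τ₂ θ₂ θ₁) r (0 : Fin d → ℤ) []
      simpa using this
    rw [h1, hz (τ₁ + τ₂)]
    push_cast
    rw [add_pow, Finset.sum_div]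
    refine Finset.sum_congr rfl fun j hj => ?_
    have hj' : j ≤ r := Finset.mem_range_succ_iff.mp hj
    rw [hz, hz]
    have key : (r.factorial : ℂ) = (r.choose j : ℂ) * (j.factorial : ℂ) * ((r - j).factorial : ℂ) := by
      exact_mod_cast (Nat.choose_mul_factorial_mul_factorial hj').symm
    rw [key]
    have h2 : (j.factorial : ℂ) ≠ 0 := Nat.cast_ne_zero.mpr j.factorial_ne_zero
    have h3 : ((r - j).factorial : ℂ) ≠ 0 := Nat.cast_ne_zero.mpr (r - j).factorial_ne_zero
    have h4 : (r.choose j : ℂ) ≠ 0 := Nat.cast_ne_zero.mpr (Nat.choose_pos hj').ne'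
    field_simp
  intro n
  induction n with
  | zero =>
    intro w hw
    have hwn : w = [] := List.eq_nil_of_length_eq_zero (Nat.le_zero.mp hw)
    subst hwn
    simpa using hzero_case 0
  | succ n IH =>
    intro w hw
    rcases decomp (0 : Fin d → ℤ) w with ⟨r, rfl⟩ | ⟨r, k, ls, hk, rfl⟩
    · exact hzero_case r
    · rcases ls with _ | ⟨l₁, ls⟩
      · -- tail is a single letter k
        rcases r with _ | r
        · -- w = [k]
          simp only [List.replicate_zero, List.nil_append]
          have hc : conv (Γ τ₁ θ₁ θ₀) (Γ τ₂ θ₂ θ₁) [k] =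
              Γ τ₁ θ₁ θ₀ [] * Γ τ₂ θ₂ θ₁ [k] + Γ τ₁ θ₁ θ₀ [k] * Γ τ₂ θ₂ θ₁ [] := by
            show ∑ j ∈ Finset.range (([k] : List (Fin d → ℤ)).length + 1), _ = _
            rw [List.length_singleton, Finset.sum_range_succ, Finset.sum_range_one]
            simp
          rw [hc, hempty, hempty, hletter τ₁ θ₁ θ₀ k hk, hletter τ₂ θ₂ θ₁ k hk,
            hletter (τ₁ + τ₂) θ₂ θ₀ k hk]
          ring
        · -- w = 0^(r+1) ++ [k]
          have hlen : r + 2 ≤ n + 1 := by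
            have := hw; simp at this; omega
          have key : ∀ j ∈ Finset.range (r + 1),
              Γ τ₁ θ₁ θ₀ (List.replicate j (0 : Fin d → ℤ)) *
                Γ τ₂ θ₂ θ₁ (List.replicate (r + 1 - j) (0 : Fin d → ℤ) ++ [k]) =
              Complex.I / (dotR k ω : ℂ) *
                  (Γ τ₁ θ₁ θ₀ (List.replicate j (0 : Fin d → ℤ)) *
                    Γ τ₂ θ₂ θ₁ (List.replicate (r - j) (0 : Fin d → ℤ) ++ [k])) -
                Complex.I / (dotR k ω : ℂ) * eExp k θ₂ *
                  (Γ τ₁ θ₁ θ₀ (List.replicate j (0 : Fin d → ℤ)) *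
                    Γ τ₂ θ₂ θ₁ (List.replicate (r - j + 1) (0 : Fin d → ℤ))) := by
            intro j hj
            have hj' : j ≤ r := Finset.mem_range_succ_iff.mp hj
            have e : r + 1 - j = (r - j) + 1 := by omega
            rw [e, hzerosk τ₂ θ₂ θ₁ ((r - j) + 1) (by omega) k hk, Nat.add_sub_cancel]
            ring
          have hL : conv (Γ τ₁ θ₁ θ₀) (Γ τ₂ θ₂ θ₁)
              (List.replicate (r + 1) (0 : Fin d → ℤ) ++ [k]) =
              (Complex.I / (dotR k ω : ℂ) *
                ∑ j ∈ Finset.range (r + 1),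
                  Γ τ₁ θ₁ θ₀ (List.replicate j (0 : Fin d → ℤ)) *
                    Γ τ₂ θ₂ θ₁ (List.replicate (r - j) (0 : Fin d → ℤ) ++ [k]) -
               Complex.I / (dotR k ω : ℂ) * eExp k θ₂ *
                ∑ j ∈ Finset.range (r + 1),
                  Γ τ₁ θ₁ θ₀ (List.replicate j (0 : Fin d → ℤ)) *
                    Γ τ₂ θ₂ θ₁ (List.replicate (r - j + 1) (0 : Fin d → ℤ))) +
              Γ τ₁ θ₁ θ₀ (List.replicate (r + 1) (0 : Fin d → ℤ)) *
                (Complex.I / (dotR k ω : ℂ) * (eExp k θ₁ - eExp k θ₂)) +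
              Complex.I / (dotR k ω : ℂ) *
                (Γ τ₁ θ₁ θ₀ (List.replicate r (0 : Fin d → ℤ) ++ [k]) -
                  Γ τ₁ θ₁ θ₀ (List.replicate (r + 1) (0 : Fin d → ℤ)) * eExp k θ₁) := by
            rw [conv_split, List.length_singleton, Finset.sum_range_succ, Finset.sum_range_one,
              Finset.sum_congr rfl key, Finset.sum_sub_distrib, ← Finset.mul_sum,
              ← Finset.mul_sum]
            have e1 : r + 1 - (r + 1) = 0 := by omega
            rw [e1]
            simp only [List.replicate_zero, List.nil_append, List.take_succ_cons,
              List.take_nil, List.drop_succ_cons, List.drop_nil]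
            rw [hletter τ₂ θ₂ θ₁ k hk, hzerosk τ₁ θ₁ θ₀ (r + 1) (by omega) k hk,
              Nat.add_sub_cancel, hempty, mul_one]
          have hR1 : conv (Γ τ₁ θ₁ θ₀) (Γ τ₂ θ₂ θ₁)
              (List.replicate r (0 : Fin d → ℤ) ++ [k]) =
              (∑ j ∈ Finset.range (r + 1),
                Γ τ₁ θ₁ θ₀ (List.replicate j (0 : Fin d → ℤ)) *
                  Γ τ₂ θ₂ θ₁ (List.replicate (r - j) (0 : Fin d → ℤ) ++ [k])) +
              Γ τ₁ θ₁ θ₀ (List.replicate r (0 : Fin d → ℤ) ++ [k]) := by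
            rw [conv_split, List.length_singleton, Finset.sum_range_one]
            simp only [List.take_succ_cons, List.take_nil, List.drop_succ_cons, List.drop_nil]
            rw [hempty, mul_one]
          have hR2 : conv (Γ τ₁ θ₁ θ₀) (Γ τ₂ θ₂ θ₁)
              (List.replicate (r + 1) (0 : Fin d → ℤ)) =
              (∑ j ∈ Finset.range (r + 1),
                Γ τ₁ θ₁ θ₀ (List.replicate j (0 : Fin d → ℤ)) *
                  Γ τ₂ θ₂ θ₁ (List.replicate (r - j + 1) (0 : Fin d → ℤ))) +
              Γ τ₁ θ₁ θ₀ (List.replicate (r + 1) (0 : Fin d → ℤ)) := by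
            have h1 := conv_split (Γ τ₁ θ₁ θ₀) (Γ τ₂ θ₂ θ₁) (r + 1) (0 : Fin d → ℤ) []
            simp only [List.append_nil, List.length_nil, Finset.range_zero,
              Finset.sum_empty, add_zero] at h1
            rw [h1, Finset.sum_range_succ]
            have e1 : r + 1 - (r + 1) = 0 := by omega
            rw [e1]
            simp only [List.replicate_zero]
            rw [hempty, mul_one]
            congr 1
            refine Finset.sum_congr rfl fun j hj => ?_
            have hj' : j ≤ r := Finset.mem_range_succ_iff.mp hj
            have e : r + 1 - j = (r - j) + 1 := by omega
            rw [e]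
          have hG : Γ (τ₁ + τ₂) θ₂ θ₀ (List.replicate (r + 1) (0 : Fin d → ℤ) ++ [k]) =
              Complex.I / (dotR k ω : ℂ) *
                (Γ (τ₁ + τ₂) θ₂ θ₀ (List.replicate r (0 : Fin d → ℤ) ++ [k]) -
                  Γ (τ₁ + τ₂) θ₂ θ₀ (List.replicate (r + 1) (0 : Fin d → ℤ)) * eExp k θ₂) := by
            have := hzerosk (τ₁ + τ₂) θ₂ θ₀ (r + 1) (by omega) k hk
            simpa [Nat.add_sub_cancel] using this
          rw [hG,
            ← IH (List.replicate r (0 : Fin d → ℤ) ++ [k]) (by simp; omega),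
            ← IH (List.replicate (r + 1) (0 : Fin d → ℤ)) (by simp; omega),
            hL, hR1, hR2]
          ring
      · -- tail is k :: l₁ :: ls
        rcases r with _ | r
        · -- w = k :: l₁ :: ls
          simp only [List.replicate_zero, List.nil_append]
          have hlen : ls.length + 2 ≤ n + 1 := by
            have := hw; simp at this; omega
          have key : ∀ i ∈ Finset.range (ls.length + 1),
              Γ τ₁ θ₁ θ₀ (k :: (l₁ :: ls).take (i + 1)) * Γ τ₂ θ₂ θ₁ ((l₁ :: ls).drop (i + 1)) =
              Complex.I / (dotR k ω : ℂ) * eExp k θ₀ *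
                  (Γ τ₁ θ₁ θ₀ (l₁ :: ls.take i) * Γ τ₂ θ₂ θ₁ (ls.drop i)) -
                Complex.I / (dotR k ω : ℂ) *
                  (Γ τ₁ θ₁ θ₀ ((k + l₁) :: ls.take i) * Γ τ₂ θ₂ θ₁ (ls.drop i)) := by
            intro i hi
            simp only [List.take_succ_cons, List.drop_succ_cons]
            rw [hk_tail τ₁ θ₁ θ₀ k hk l₁ (ls.take i)]
            ring
          have hL : conv (Γ τ₁ θ₁ θ₀) (Γ τ₂ θ₂ θ₁) (k :: l₁ :: ls) =
              Complex.I / (dotR k ω : ℂ) *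
                (eExp k θ₁ * Γ τ₂ θ₂ θ₁ (l₁ :: ls) - Γ τ₂ θ₂ θ₁ ((k + l₁) :: ls)) +
              Complex.I / (dotR k ω : ℂ) * (eExp k θ₀ - eExp k θ₁) * Γ τ₂ θ₂ θ₁ (l₁ :: ls) +
              (Complex.I / (dotR k ω : ℂ) * eExp k θ₀ *
                ∑ i ∈ Finset.range (ls.length + 1),
                  Γ τ₁ θ₁ θ₀ (l₁ :: ls.take i) * Γ τ₂ θ₂ θ₁ (ls.drop i) -
               Complex.I / (dotR k ω : ℂ) *
                ∑ i ∈ Finset.range (ls.length + 1),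
                  Γ τ₁ θ₁ θ₀ ((k + l₁) :: ls.take i) * Γ τ₂ θ₂ θ₁ (ls.drop i)) := by
            rw [conv_cons, hempty, one_mul]
            rw [show ((l₁ :: ls).length + 1) = (ls.length + 1) + 1 by simp]
            rw [Finset.sum_range_succ']
            simp only [List.take_zero, List.drop_zero]
            rw [Finset.sum_congr rfl key, Finset.sum_sub_distrib, ← Finset.mul_sum,
              ← Finset.mul_sum]
            rw [hk_tail τ₂ θ₂ θ₁ k hk l₁ ls, hletter τ₁ θ₁ θ₀ k hk]
            ring
          have hR1 : conv (Γ τ₁ θ₁ θ₀) (Γ τ₂ θ₂ θ₁) (l₁ :: ls) =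
              Γ τ₂ θ₂ θ₁ (l₁ :: ls) +
              ∑ i ∈ Finset.range (ls.length + 1),
                Γ τ₁ θ₁ θ₀ (l₁ :: ls.take i) * Γ τ₂ θ₂ θ₁ (ls.drop i) := by
            rw [conv_cons, hempty, one_mul]
          have hR2 : conv (Γ τ₁ θ₁ θ₀) (Γ τ₂ θ₂ θ₁) ((k + l₁) :: ls) =
              Γ τ₂ θ₂ θ₁ ((k + l₁) :: ls) +
              ∑ i ∈ Finset.range (ls.length + 1),
                Γ τ₁ θ₁ θ₀ ((k + l₁) :: ls.take i) * Γ τ₂ θ₂ θ₁ (ls.drop i) := by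
            rw [conv_cons, hempty, one_mul]
          rw [hk_tail (τ₁ + τ₂) θ₂ θ₀ k hk l₁ ls,
            ← IH (l₁ :: ls) (by simp; omega),
            ← IH ((k + l₁) :: ls) (by simp; omega),
            hL, hR1, hR2]
          ring
        · -- w = 0^(r+1) ++ k :: l₁ :: ls
          have hlen : r + ls.length + 3 ≤ n + 1 := by
            have := hw; simp at this; omega
          have key1 : ∀ j ∈ Finset.range (r + 1),
              Γ τ₁ θ₁ θ₀ (List.replicate j (0 : Fin d → ℤ)) *
                Γ τ₂ θ₂ θ₁ (List.replicate (r + 1 - j) (0 : Fin d → ℤ) ++ k :: l₁ :: ls) =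
              Complex.I / (dotR k ω : ℂ) *
                  (Γ τ₁ θ₁ θ₀ (List.replicate j (0 : Fin d → ℤ)) *
                    Γ τ₂ θ₂ θ₁ (List.replicate (r - j) (0 : Fin d → ℤ) ++ k :: l₁ :: ls)) -
                Complex.I / (dotR k ω : ℂ) *
                  (Γ τ₁ θ₁ θ₀ (List.replicate j (0 : Fin d → ℤ)) *
                    Γ τ₂ θ₂ θ₁ (List.replicate (r - j + 1) (0 : Fin d → ℤ) ++ (k + l₁) :: ls)) := by
            intro j hj
            have hj' : j ≤ r := Finset.mem_range_succ_iff.mp hj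
            have e : r + 1 - j = (r - j) + 1 := by omega
            rw [e, hzerosk_tail τ₂ θ₂ θ₁ ((r - j) + 1) (by omega) k hk l₁ ls, Nat.add_sub_cancel]
            ring
          have key2 : ∀ i ∈ Finset.range (ls.length + 1),
              Γ τ₁ θ₁ θ₀ (List.replicate (r + 1) (0 : Fin d → ℤ) ++ k :: l₁ :: ls.take i) *
                Γ τ₂ θ₂ θ₁ (ls.drop i) =
              Complex.I / (dotR k ω : ℂ) *
                  (Γ τ₁ θ₁ θ₀ (List.replicate r (0 : Fin d → ℤ) ++ k :: l₁ :: ls.take i) *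
                    Γ τ₂ θ₂ θ₁ (ls.drop i)) -
                Complex.I / (dotR k ω : ℂ) *
                  (Γ τ₁ θ₁ θ₀ (List.replicate (r + 1) (0 : Fin d → ℤ) ++ (k + l₁) :: ls.take i) *
                    Γ τ₂ θ₂ θ₁ (ls.drop i)) := by
            intro i hi
            rw [hzerosk_tail τ₁ θ₁ θ₀ (r + 1) (by omega) k hk l₁ (ls.take i), Nat.add_sub_cancel]
            ring
          have hsecL : ∑ i ∈ Finset.range ((k :: l₁ :: ls).length),
              Γ τ₁ θ₁ θ₀ (List.replicate (r + 1) (0 : Fin d → ℤ) ++ (k :: l₁ :: ls).take (i + 1)) *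
                Γ τ₂ θ₂ θ₁ ((k :: l₁ :: ls).drop (i + 1)) =
              (Complex.I / (dotR k ω : ℂ) *
                ∑ i ∈ Finset.range (ls.length + 1),
                  Γ τ₁ θ₁ θ₀ (List.replicate r (0 : Fin d → ℤ) ++ k :: l₁ :: ls.take i) *
                    Γ τ₂ θ₂ θ₁ (ls.drop i) -
               Complex.I / (dotR k ω : ℂ) *
                ∑ i ∈ Finset.range (ls.length + 1),
                  Γ τ₁ θ₁ θ₀ (List.replicate (r + 1) (0 : Fin d → ℤ) ++ (k + l₁) :: ls.take i) *
                    Γ τ₂ θ₂ θ₁ (ls.drop i)) +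
              Complex.I / (dotR k ω : ℂ) *
                (Γ τ₁ θ₁ θ₀ (List.replicate r (0 : Fin d → ℤ) ++ [k]) -
                  Γ τ₁ θ₁ θ₀ (List.replicate (r + 1) (0 : Fin d → ℤ)) * eExp k θ₁) *
                Γ τ₂ θ₂ θ₁ (l₁ :: ls) := by
            rw [show ((k :: l₁ :: ls).length) = (ls.length + 1) + 1 by simp,
              Finset.sum_range_succ']
            simp only [List.take_succ_cons, List.take_zero, List.drop_succ_cons, List.drop_zero]
            rw [Finset.sum_congr rfl key2, Finset.sum_sub_distrib, ← Finset.mul_sum,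
              ← Finset.mul_sum,
              hzerosk τ₁ θ₁ θ₀ (r + 1) (by omega) k hk, Nat.add_sub_cancel]
          have hsecR1 : ∑ i ∈ Finset.range ((k :: l₁ :: ls).length),
              Γ τ₁ θ₁ θ₀ (List.replicate r (0 : Fin d → ℤ) ++ (k :: l₁ :: ls).take (i + 1)) *
                Γ τ₂ θ₂ θ₁ ((k :: l₁ :: ls).drop (i + 1)) =
              (∑ i ∈ Finset.range (ls.length + 1),
                Γ τ₁ θ₁ θ₀ (List.replicate r (0 : Fin d → ℤ) ++ k :: l₁ :: ls.take i) *
                  Γ τ₂ θ₂ θ₁ (ls.drop i)) +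
               Γ τ₁ θ₁ θ₀ (List.replicate r (0 : Fin d → ℤ) ++ [k]) * Γ τ₂ θ₂ θ₁ (l₁ :: ls) := by
            rw [show ((k :: l₁ :: ls).length) = (ls.length + 1) + 1 by simp,
              Finset.sum_range_succ']
            simp only [List.take_succ_cons, List.take_zero, List.drop_succ_cons, List.drop_zero]
          have hL : conv (Γ τ₁ θ₁ θ₀) (Γ τ₂ θ₂ θ₁)
              (List.replicate (r + 1) (0 : Fin d → ℤ) ++ k :: l₁ :: ls) =
              ((Complex.I / (dotR k ω : ℂ) *
                ∑ j ∈ Finset.range (r + 1),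
                  Γ τ₁ θ₁ θ₀ (List.replicate j (0 : Fin d → ℤ)) *
                    Γ τ₂ θ₂ θ₁ (List.replicate (r - j) (0 : Fin d → ℤ) ++ k :: l₁ :: ls) -
               Complex.I / (dotR k ω : ℂ) *
                ∑ j ∈ Finset.range (r + 1),
                  Γ τ₁ θ₁ θ₀ (List.replicate j (0 : Fin d → ℤ)) *
                    Γ τ₂ θ₂ θ₁ (List.replicate (r - j + 1) (0 : Fin d → ℤ) ++ (k + l₁) :: ls)) +
              Γ τ₁ θ₁ θ₀ (List.replicate (r + 1) (0 : Fin d → ℤ)) *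
                (Complex.I / (dotR k ω : ℂ) *
                  (eExp k θ₁ * Γ τ₂ θ₂ θ₁ (l₁ :: ls) - Γ τ₂ θ₂ θ₁ ((k + l₁) :: ls)))) +
              ((Complex.I / (dotR k ω : ℂ) *
                ∑ i ∈ Finset.range (ls.length + 1),
                  Γ τ₁ θ₁ θ₀ (List.replicate r (0 : Fin d → ℤ) ++ k :: l₁ :: ls.take i) *
                    Γ τ₂ θ₂ θ₁ (ls.drop i) -
               Complex.I / (dotR k ω : ℂ) *
                ∑ i ∈ Finset.range (ls.length + 1),
                  Γ τ₁ θ₁ θ₀ (List.replicate (r + 1) (0 : Fin d → ℤ) ++ (k + l₁) :: ls.take i) *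
                    Γ τ₂ θ₂ θ₁ (ls.drop i)) +
              Complex.I / (dotR k ω : ℂ) *
                (Γ τ₁ θ₁ θ₀ (List.replicate r (0 : Fin d → ℤ) ++ [k]) -
                  Γ τ₁ θ₁ θ₀ (List.replicate (r + 1) (0 : Fin d → ℤ)) * eExp k θ₁) *
                Γ τ₂ θ₂ θ₁ (l₁ :: ls)) := by
            rw [conv_split, hsecL, Finset.sum_range_succ,
              Finset.sum_congr rfl key1, Finset.sum_sub_distrib, ← Finset.mul_sum,
              ← Finset.mul_sum]
            have e1 : r + 1 - (r + 1) = 0 := by omega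
            rw [e1]
            simp only [List.replicate_zero, List.nil_append]
            rw [hk_tail τ₂ θ₂ θ₁ k hk l₁ ls]
          have hR1 : conv (Γ τ₁ θ₁ θ₀) (Γ τ₂ θ₂ θ₁)
              (List.replicate r (0 : Fin d → ℤ) ++ k :: l₁ :: ls) =
              (∑ j ∈ Finset.range (r + 1),
                Γ τ₁ θ₁ θ₀ (List.replicate j (0 : Fin d → ℤ)) *
                  Γ τ₂ θ₂ θ₁ (List.replicate (r - j) (0 : Fin d → ℤ) ++ k :: l₁ :: ls)) +
              ((∑ i ∈ Finset.range (ls.length + 1),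
                Γ τ₁ θ₁ θ₀ (List.replicate r (0 : Fin d → ℤ) ++ k :: l₁ :: ls.take i) *
                  Γ τ₂ θ₂ θ₁ (ls.drop i)) +
               Γ τ₁ θ₁ θ₀ (List.replicate r (0 : Fin d → ℤ) ++ [k]) * Γ τ₂ θ₂ θ₁ (l₁ :: ls)) := by
            rw [conv_split, hsecR1]
          have hR2 : conv (Γ τ₁ θ₁ θ₀) (Γ τ₂ θ₂ θ₁)
              (List.replicate (r + 1) (0 : Fin d → ℤ) ++ (k + l₁) :: ls) =
              ((∑ j ∈ Finset.range (r + 1),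
                Γ τ₁ θ₁ θ₀ (List.replicate j (0 : Fin d → ℤ)) *
                  Γ τ₂ θ₂ θ₁ (List.replicate (r - j + 1) (0 : Fin d → ℤ) ++ (k + l₁) :: ls)) +
               Γ τ₁ θ₁ θ₀ (List.replicate (r + 1) (0 : Fin d → ℤ)) *
                 Γ τ₂ θ₂ θ₁ ((k + l₁) :: ls)) +
              ∑ i ∈ Finset.range (ls.length + 1),
                Γ τ₁ θ₁ θ₀ (List.replicate (r + 1) (0 : Fin d → ℤ) ++ (k + l₁) :: ls.take i) *
                  Γ τ₂ θ₂ θ₁ (ls.drop i) := by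
            rw [conv_split, Finset.sum_range_succ]
            have e1 : r + 1 - (r + 1) = 0 := by omega
            rw [e1]
            simp only [List.replicate_zero, List.nil_append, List.length_cons,
              List.take_succ_cons, List.drop_succ_cons]
            congr 2
            refine Finset.sum_congr rfl fun j hj => ?_
            have hj' : j ≤ r := Finset.mem_range_succ_iff.mp hj
            have e : r + 1 - j = (r - j) + 1 := by omega
            rw [e]
          have hG : Γ (τ₁ + τ₂) θ₂ θ₀
              (List.replicate (r + 1) (0 : Fin d → ℤ) ++ k :: l₁ :: ls) =
              Complex.I / (dotR k ω : ℂ) *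
                (Γ (τ₁ + τ₂) θ₂ θ₀ (List.replicate r (0 : Fin d → ℤ) ++ k :: l₁ :: ls) -
                  Γ (τ₁ + τ₂) θ₂ θ₀
                    (List.replicate (r + 1) (0 : Fin d → ℤ) ++ (k + l₁) :: ls)) := by
            have := hzerosk_tail (τ₁ + τ₂) θ₂ θ₀ (r + 1) (by omega) k hk l₁ ls
            simpa [Nat.add_sub_cancel] using this
          rw [hG,
            ← IH (List.replicate r (0 : Fin d → ℤ) ++ k :: l₁ :: ls) (by simp; omega),
            ← IH (List.replicate (r + 1) (0 : Fin d → ℤ) ++ (k + l₁) :: ls) (by simp; omega),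
            hL, hR1, hR2]
          ring
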